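/- Let t be a binary tree with n leaves, let 0 < α < 1, β = √(1 − α²), and set h(n) := (1/2)·log₂(n/2). For a state τ of t, let m(τ) be the number of internal vertices of t that have a strict ancestor assigned 1 by τ. Then ∑_{τ : m(τ) ≤ h(n)} α_τ² ≤ α^{2·h(n)}, where the sum ranges over all states τ of t with m(τ) ≤ h(n) and the right-hand side is a real power. -/

import Mathlib

/-! A tree with `n` leaves has depth `D ≥ log₂ n`, so some root path runs through `D` internal
vertices. If a state assigns `1` to the `j`-th vertex of that path, the `D - j - 1` path vertices
below it are counted by `m`; hence every state with `m ≤ h` vanishes on the first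
`k = ⌈D - 1 - h⌉` vertices of the path. As `α² + β² = 1`, the weights `α_τ²` of all states
vanishing on a fixed set of `k` vertices sum to `α^(2k)`, and `k ≥ h` because `2h + 1 ≤ D`. -/

open Classical

/-- Finite ordered rooted binary trees. -/
inductive BTree where
  | leaf : BTree
  | node : BTree → BTree → BTree
deriving DecidableEq

/-- Positions (vertices) in a binary tree: `false` = go to the left child,
`true` = go to the right child. -/
abbrev Pos := List Bool

/-- The number of leaves of a binary tree. -/
def BTree.leaves : BTree → ℕ
  | .leaf => 1
  | .node l r => l.leaves + r.leaves

/-- The finite set of positions of internal vertices of a binary tree. -/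
def BTree.internalVerts : BTree → Finset Pos
  | .leaf => ∅
  | .node l r =>
      insert ([] : Pos)
        ((l.internalVerts.image (List.cons false)) ∪
          (r.internalVerts.image (List.cons true)))

/-- A state of `t`: a function from the internal vertices of `t` to `{0,1}`. -/
abbrev BState (t : BTree) := { p : Pos // p ∈ t.internalVerts } → Fin 2

/-- `mval t τ` is the number of internal vertices of `t` that have a strict ancestor
(a vertex whose position is a proper prefix) assigned `1` by the state `τ`. -/
noncomputable def mval (t : BTree) (τ : BState t) : ℕ :=
  (t.internalVerts.filter fun p =>
    ∃ q : { p : Pos // p ∈ t.internalVerts }, q.1 <+: p ∧ q.1 ≠ p ∧ τ q = 1).card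

/-- `ataus α β t τ = α^(|τ⁻¹(0)|) * β^(|τ⁻¹(1)|)` for a state `τ` of `t`. -/
noncomputable def ataus (α β : ℝ) (t : BTree) (τ : BState t) : ℝ :=
  α ^ (Finset.univ.filter fun v => τ v = 0).card
    * β ^ (Finset.univ.filter fun v => τ v = 1).card

theorem Finset.sum_prod_ite_le_pow_card {ι : Type*} [Fintype ι] {a b : ℝ} (ha : 0 ≤ a)
    (hb : 0 ≤ b) (hab : a + b = 1) (Z : Finset ι) (S : Finset (ι → Fin 2))
    (hS : ∀ τ ∈ S, ∀ v ∈ Z, τ v = 0) :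
    ∑ τ ∈ S, ∏ v, (if τ v = 0 then a else b) ≤ a ^ Z.card := by
  classical
  set T : ι → Finset (Fin 2) := fun v => if v ∈ Z then {0} else univ
  have hST : S ⊆ Fintype.piFinset T := fun τ hτ => Fintype.mem_piFinset.mpr fun v => by
    by_cases hv : v ∈ Z
    · simp only [T, hv, if_true, mem_singleton, hS τ hτ v hv]
    · simp only [T, hv, if_false, mem_univ]
  calc ∑ τ ∈ S, ∏ v, (if τ v = 0 then a else b)
      ≤ ∑ τ ∈ Fintype.piFinset T, ∏ v, (if τ v = 0 then a else b) :=
        sum_le_sum_of_subset_of_nonneg hST fun _ _ _ =>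
          prod_nonneg fun _ _ => by split <;> assumption
    _ = ∏ v, ∑ x ∈ T v, (if x = 0 then a else b) := by rw [prod_univ_sum]
    _ = ∏ v, (if v ∈ Z then a else 1) := prod_congr rfl fun v _ => by
        by_cases hv : v ∈ Z <;> simp [T, hv, Fin.sum_univ_two, hab]
    _ = a ^ Z.card := by rw [prod_ite_mem, univ_inter, prod_const]

namespace BTree

def depth : BTree → ℕ
  | leaf => 0
  | node l r => max l.depth r.depth + 1

def deepestPath : BTree → Pos
  | leaf => []
  | node l r => if r.depth ≤ l.depth then false :: l.deepestPath else true :: r.deepestPath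

lemma length_deepestPath (t : BTree) : t.deepestPath.length = t.depth := by
  induction t with
  | leaf => rfl
  | node l r hl hr =>
    rw [deepestPath, depth]
    split <;> simp only [List.length_cons, hl, hr] <;> omega

lemma take_deepestPath_mem (t : BTree) {j : ℕ} (hj : j < t.depth) :
    t.deepestPath.take j ∈ t.internalVerts := by
  induction t generalizing j with
  | leaf => simp [depth] at hj
  | node l r hl hr =>
    cases j with
    | zero => simp [internalVerts]
    | succ j =>
      rw [depth] at hj
      rw [deepestPath, internalVerts]
      split
      · simpa using hl (j := j) (by omega)
      · simpa using hr (j := j) (by omega)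

lemma leaves_pos (t : BTree) : 0 < t.leaves := by
  induction t with
  | leaf => simp [leaves]
  | node l r hl hr => simp only [leaves]; omega

lemma leaves_le_two_pow_depth (t : BTree) : t.leaves ≤ 2 ^ t.depth := by
  induction t with
  | leaf => simp [leaves, depth]
  | node l r hl hr =>
    have := Nat.pow_le_pow_right two_pos (le_max_left l.depth r.depth)
    have := Nat.pow_le_pow_right two_pos (le_max_right l.depth r.depth)
    rw [leaves, depth, pow_succ]
    omega

lemma logb_leaves_le_depth (t : BTree) : Real.logb 2 t.leaves ≤ t.depth := by
  calc Real.logb 2 t.leaves ≤ Real.logb 2 (2 ^ t.depth) :=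
        Real.logb_le_logb_of_le one_lt_two (by exact_mod_cast t.leaves_pos)
          (by exact_mod_cast t.leaves_le_two_pow_depth)
    _ = t.depth := by rw [Real.logb_pow, Real.logb_self_eq_one one_lt_two, mul_one]

lemma apply_take_deepestPath_eq_zero {t : BTree} (τ : BState t) {j : ℕ}
    (hj : mval t τ + j + 1 < t.depth) :
    τ ⟨t.deepestPath.take j, t.take_deepestPath_mem (by omega)⟩ = 0 := by
  by_contra hne
  have hone : τ ⟨t.deepestPath.take j, t.take_deepestPath_mem (by omega)⟩ = 1 := by omega
  have hinj : Set.InjOn t.deepestPath.take (Finset.Ico (j + 1) t.depth) := fun i hi i' hi' h => by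
    simp only [Finset.coe_Ico, Set.mem_Ico] at hi hi'
    have := List.take_eq_take_iff.mp h
    rw [length_deepestPath] at this
    omega
  have hcount : t.depth - (j + 1) ≤ mval t τ := by
    rw [← Nat.card_Ico, ← Finset.card_image_of_injOn hinj]
    refine Finset.card_le_card fun p hp => ?_
    obtain ⟨i, hi, rfl⟩ := Finset.mem_image.mp hp
    rw [Finset.mem_Ico] at hi
    refine Finset.mem_filter.mpr ⟨t.take_deepestPath_mem hi.2, _,
      List.take_prefix_take_left (by omega : j ≤ i), fun heq => ?_, hone⟩
    have := List.take_eq_take_iff.mp heq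
    rw [length_deepestPath] at this
    omega
  omega

def deepestPathPrefixes (t : BTree) (k : ℕ) : Finset { p : Pos // p ∈ t.internalVerts } :=
  Finset.univ.filter fun v => ∃ j < k, v.1 = t.deepestPath.take j

lemma card_deepestPathPrefixes {t : BTree} {k : ℕ} (hk : k ≤ t.depth) :
    (t.deepestPathPrefixes k).card = k := by
  refine (Finset.card_bij
    (fun j hj => ⟨t.deepestPath.take j, t.take_deepestPath_mem (by simp at hj; omega)⟩)
    (fun j hj => Finset.mem_filter.mpr ⟨Finset.mem_univ _, j, Finset.mem_range.mp hj, rfl⟩)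
    (fun i hi j hj hij => ?_) (fun v hv => ?_)).symm.trans (Finset.card_range k)
  · have := List.take_eq_take_iff.mp (congrArg Subtype.val hij)
    simp only [Finset.mem_range] at hi hj
    rw [length_deepestPath] at this
    omega
  · obtain ⟨j, hj, hv⟩ := (Finset.mem_filter.mp hv).2
    exact ⟨j, Finset.mem_range.mpr hj, Subtype.ext hv.symm⟩

lemma apply_eq_zero_of_mem_deepestPathPrefixes {t : BTree} (τ : BState t) {x : ℝ}
    (hτ : (mval t τ : ℝ) ≤ x) {v : { p : Pos // p ∈ t.internalVerts }}
    (hv : v ∈ t.deepestPathPrefixes ⌈(t.depth : ℝ) - 1 - x⌉₊) : τ v = 0 := by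
  obtain ⟨j, hj, hv⟩ := (Finset.mem_filter.mp hv).2
  have hj_depth : mval t τ + j + 1 < t.depth := by
    have := Nat.lt_ceil.mp hj
    exact_mod_cast (by linarith : (mval t τ : ℝ) + j + 1 < t.depth)
  obtain rfl : v = ⟨_, t.take_deepestPath_mem (by omega)⟩ := Subtype.ext hv
  exact apply_take_deepestPath_eq_zero τ hj_depth

end BTree

lemma ataus_sq (α β : ℝ) (t : BTree) (τ : BState t) :
    ataus α β t τ ^ 2 = ∏ v, (if τ v = 0 then α ^ 2 else β ^ 2) := by
  have hne : (Finset.univ.filter fun v => ¬τ v = 0) = Finset.univ.filter fun v => τ v = 1 :=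
    Finset.filter_congr fun v _ => by omega
  rw [Finset.prod_ite, Finset.prod_const, Finset.prod_const, hne, ataus]
  ring

/-- Let `t` be a binary tree with `n` leaves, `0 < α < 1`,
`β = √(1 − α²)`, `h(n) = (1/2)·log₂(n/2)`. Then
`∑_{τ : m(τ) ≤ h(n)} α_τ² ≤ α^(2 h(n))`, the sum ranging over all states `τ` of `t`
with `m(τ) ≤ h(n)`, and the right-hand side being a real power. -/
theorem stmt14 (α β : ℝ) (hα0 : 0 < α) (hα1 : α < 1)
    (hβ : β = Real.sqrt (1 - α ^ 2)) (t : BTree) (n : ℕ) (hn : t.leaves = n) :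
    ∑ τ ∈ Finset.univ.filter
        (fun τ : BState t => (mval t τ : ℝ) ≤ (1 / 2) * Real.logb 2 ((n : ℝ) / 2)),
      (ataus α β t τ) ^ 2
      ≤ α ^ (2 * ((1 / 2) * Real.logb 2 ((n : ℝ) / 2))) := by
  set h := (1 / 2) * Real.logb 2 ((n : ℝ) / 2) with hh
  have hlogb : Real.logb 2 ((n : ℝ) / 2) = Real.logb 2 t.leaves - 1 := by
    rw [hn, Real.logb_div (by simp [← hn, t.leaves_pos.ne']) two_ne_zero,
      Real.logb_self_eq_one one_lt_two]
  have hlogb_nonneg : 0 ≤ Real.logb 2 t.leaves :=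
    Real.logb_nonneg one_lt_two (by exact_mod_cast t.leaves_pos)
  have hdepth := t.logb_leaves_le_depth
  set k := ⌈(t.depth : ℝ) - 1 - h⌉₊
  have hk_depth : k ≤ t.depth := Nat.ceil_le.mpr (by linarith)
  have hh_k : h ≤ k := le_trans (by linarith) (Nat.le_ceil _)
  have hαβ : α ^ 2 + β ^ 2 = 1 := by
    rw [hβ, Real.sq_sqrt (by nlinarith)]
    ring
  calc _ = ∑ τ ∈ Finset.univ.filter (fun τ : BState t => (mval t τ : ℝ) ≤ h),
          ∏ v, (if τ v = 0 then α ^ 2 else β ^ 2) :=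
        Finset.sum_congr rfl fun τ _ => ataus_sq α β t τ
    _ ≤ (α ^ 2) ^ (t.deepestPathPrefixes k).card :=
        Finset.sum_prod_ite_le_pow_card (sq_nonneg _) (sq_nonneg _) hαβ _ _ fun τ hτ _ =>
          BTree.apply_eq_zero_of_mem_deepestPathPrefixes τ (Finset.mem_filter.mp hτ).2
    _ = α ^ (2 * (k : ℝ)) := by
        rw [BTree.card_deepestPathPrefixes hk_depth, ← pow_mul, ← Real.rpow_natCast]
        push_cast
        ring_nf
    _ ≤ α ^ (2 * h) := Real.rpow_le_rpow_of_exponent_ge hα0 hα1.le (by linarith)
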